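/- arXiv:2312.09834 — 8 statements merged into one kernel-verified Lean document; each statement's English description precedes it below -/
import Mathlib

section
/- Let T: X ⇉ X* be set-valued and ρ ≥ 0. The Bregman–Yosida regularization T_ρ = (ρ∇φ* + T⁻¹)⁻¹ is monotone if and only if T⁻¹ is hypomonotone relative to ∇φ* with parameter ρ, i.e. ⟨u − v, x − y⟩ ≥ −ρ⟨∇φ*(x) − ∇φ*(y), x − y⟩ for all (x,u), (y,v) ∈ gph T⁻¹. -/
open scoped RealInnerProductSpace

/-- The graph of `(g + T⁻¹)⁻¹` is the image of the graph of `T⁻¹` under `(u, v) ↦ (u + g v, v)`. -/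
theorem forall_mem_sub_iff {X : Type*} [AddGroup X] (T : X → Set X) (g : X → X)
    (P : X → X → X → X → Prop) :
    (∀ x y v w : X, v ∈ T (x - g v) → w ∈ T (y - g w) → P x y v w) ↔
      ∀ u u' v w : X, v ∈ T u → w ∈ T u' → P (u + g v) (u' + g w) v w := by
  constructor
  · intro h u u' v w hv hw
    exact h _ _ v w (by rwa [add_sub_cancel_right]) (by rwa [add_sub_cancel_right])
  · intro h x y v w hv hw
    simpa only [sub_add_cancel] using h _ _ v w hv hw

theorem inner_add_smul_sub_add_smul {X : Type*} [NormedAddCommGroup X] [InnerProductSpace ℝ X]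
    (z u v a b : X) (ρ : ℝ) :
    ⟪z, (u + ρ • a) - (v + ρ • b)⟫ = ⟪u - v, z⟫ + ρ * ⟪a - b, z⟫ := by
  rw [add_sub_add_comm, ← smul_sub, inner_add_right, real_inner_smul_right,
    real_inner_comm (u - v), real_inner_comm (a - b)]

theorem stmt4_general {X : Type*} [NormedAddCommGroup X] [InnerProductSpace ℝ X]
    (gφs : X → X)
    (T : X → Set X) (ρ : ℝ) :
    (∀ x y v w : X, v ∈ T (x - ρ • gφs v) → w ∈ T (y - ρ • gφs w) →
        0 ≤ ⟪v - w, x - y⟫) ↔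
      (∀ u v x y : X, x ∈ T u → y ∈ T v →
        -(ρ * ⟪gφs x - gφs y, x - y⟫) ≤ ⟪u - v, x - y⟫) := by
  rw [forall_mem_sub_iff T (fun v => ρ • gφs v)]
  refine forall₄_congr fun u v x y => imp_congr_right fun _ => imp_congr_right fun _ => ?_
  rw [inner_add_smul_sub_add_smul, neg_le_iff_add_nonneg]

/-- `T_ρ = (ρ∇φ* + T⁻¹)⁻¹` is monotone iff `T⁻¹` is hypomonotone relative to `∇φ*`
with parameter `ρ`. -/
theorem stmt4 {X : Type*} [NormedAddCommGroup X] [InnerProductSpace ℝ X] [CompleteSpace X]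
    (φ : X → ℝ) (gφ gφs : X → X)
    (hconv : StrictConvexOn ℝ Set.univ φ)
    (hgrad : ∀ x, HasGradientAt φ (gφ x) x)
    (hsc : Filter.Tendsto (fun x => φ x / ‖x‖) (Filter.cocompact X) Filter.atTop)
    (hinv1 : Function.LeftInverse gφs gφ)
    (hinv2 : Function.RightInverse gφs gφ)
    (hsmono : ∀ u v : X, u ≠ v → 0 < ⟪gφs u - gφs v, u - v⟫)
    (T : X → Set X) (ρ : ℝ) (hρ : 0 ≤ ρ) :
    (∀ x y v w : X, v ∈ T (x - ρ • gφs v) → w ∈ T (y - ρ • gφs w) →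
        0 ≤ ⟪v - w, x - y⟫) ↔
      (∀ u v x y : X, x ∈ T u → y ∈ T v →
        -(ρ * ⟪gφs x - gφs y, x - y⟫) ≤ ⟪u - v, x - y⟫) :=
  stmt4_general gφs T ρ
end

section
/- Let T: X ⇉ X* be set-valued, ρ ≥ 0, and ∇φ* continuous. Then T is coercive (meaning ‖xⁿ‖ → ∞ implies inf‖T(xⁿ)‖ → ∞) if and only if the Bregman–Yosida regularization T_ρ = (ρ∇φ* + T⁻¹)⁻¹ is coercive. -/
open Filter Topology
open scoped ENNReal

/-- A set-valued map `S : X ⇉ X` is coercive if `‖xⁿ‖ → ∞` implies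
`inf{‖v‖ : v ∈ S(xⁿ)} → ∞` (with `inf ∅ = ∞`). -/
def IsCoerciveOp {X : Type*} [NormedAddCommGroup X] (S : X → Set X) : Prop :=
  ∀ x : ℕ → X, Tendsto (fun n => ‖x n‖) atTop atTop →
    Tendsto (fun n => ⨅ v ∈ S (x n), (‖v‖₊ : ℝ≥0∞)) atTop (nhds ⊤)

/-!
Write `d = ρ • ∇φ*`, so that `v ∈ T_ρ x ↔ v ∈ T (x - d v)`. Coercivity of a set-valued map
is the statement that its inverse maps bounded sets to bounded sets, and
`T_ρ⁻¹ B ⊆ T⁻¹ B + d '' B`; applying this to `T_ρ` and `-d` recovers `T`. So everything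
reduces to `∇φ*` mapping bounded sets to bounded sets, which holds because `∇φ*` is a right
inverse of `∇φ` and `∇φ` is coercive: the gradient inequality at `0` gives
`⟪∇φ x, x⟫ ≥ φ x - φ 0`, which grows superlinearly in `‖x‖`.
-/

open Bornology

section Coercive

variable {X : Type*} [NormedAddCommGroup X]

theorem isCoerciveOp_iff_isBounded_preimage (S : X → Set X) :
    IsCoerciveOp S ↔ ∀ ⦃B : Set X⦄, IsBounded B → IsBounded {x | (S x ∩ B).Nonempty} := by
  constructor
  · intro hS B hB
    by_contra hunb
    obtain ⟨C, hC⟩ := hB.exists_norm_le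
    have hfar : ∀ n : ℕ, ∃ x, (S x ∩ B).Nonempty ∧ (n : ℝ) ≤ ‖x‖ := fun n => by
      by_contra! hnear
      exact hunb (isBounded_iff_forall_norm_le.2 ⟨n, fun x hx => (hnear x hx).le⟩)
    choose x hxS hx using hfar
    obtain ⟨n, hn⟩ := ((ENNReal.tendsto_nhds_top_iff_nnreal.1 <|
      hS x (tendsto_atTop_mono hx tendsto_natCast_atTop_atTop)) C.toNNReal).exists
    obtain ⟨v, hvS, hvB⟩ := hxS n
    refine hn.not_ge ((iInf₂_le v hvS).trans ?_)
    rw [ENNReal.coe_le_coe, ← norm_toNNReal]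
    exact Real.toNNReal_le_toNNReal (hC v hvB)
  · intro hS x hx
    refine ENNReal.tendsto_nhds_top_iff_nnreal.2 fun M => ?_
    obtain ⟨R, hR⟩ := (hS (Metric.isBounded_closedBall (x := 0) (r := M + 1))).exists_norm_le
    filter_upwards [hx.eventually_gt_atTop R] with n hn
    calc (M : ℝ≥0∞) < ((M + 1 : NNReal) : ℝ≥0∞) := by exact_mod_cast lt_add_one M
      _ ≤ ⨅ v ∈ S (x n), (‖v‖₊ : ℝ≥0∞) := le_iInf₂ fun v hv => by
        by_contra! hvM
        have hvB : v ∈ Metric.closedBall (0 : X) (M + 1) := by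
          rw [mem_closedBall_zero_iff]
          exact_mod_cast (ENNReal.coe_lt_coe.1 hvM).le
        exact (hR (x n) ⟨v, hv, hvB⟩).not_gt hn

theorem IsCoerciveOp.shift {T : X → Set X} (hT : IsCoerciveOp T) {d : X → X}
    (hd : ∀ ⦃B : Set X⦄, IsBounded B → IsBounded (d '' B)) :
    IsCoerciveOp fun x => {v | v ∈ T (x - d v)} := by
  rw [isCoerciveOp_iff_isBounded_preimage] at hT ⊢
  intro B hB
  refine ((hT hB).add (hd hB)).subset ?_
  rintro x ⟨v, hvT, hvB⟩
  exact ⟨x - d v, ⟨v, hvT, hvB⟩, d v, Set.mem_image_of_mem d hvB, sub_add_cancel x (d v)⟩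

theorem isCoerciveOp_shift_iff (T : X → Set X) {d : X → X}
    (hd : ∀ ⦃B : Set X⦄, IsBounded B → IsBounded (d '' B)) :
    IsCoerciveOp T ↔ IsCoerciveOp fun x => {v | v ∈ T (x - d v)} := by
  refine ⟨fun hT => hT.shift hd, fun hT => ?_⟩
  have hnegd : ∀ ⦃B : Set X⦄, IsBounded B → IsBounded ((-d) '' B) := fun B hB => by
    have := (hd hB).neg
    rw [← Set.image_neg_eq_neg, Set.image_image] at this
    exact this
  simpa only [Set.mem_ofPred_eq, Pi.neg_apply, sub_neg_eq_add, add_sub_cancel_right,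
    Set.ofPred_mem_eq] using hT.shift hnegd

end Coercive

theorem isBounded_image_of_rightInverse {α β : Type*} [Bornology α] [Bornology β]
    {g : α → β} {h : β → α} (hg : Tendsto g (cobounded α) (cobounded β))
    (hgh : Function.RightInverse h g) {B : Set β} (hB : IsBounded B) : IsBounded (h '' B) := by
  have hpre : IsBounded (g ⁻¹' B) := by
    rw [isBounded_def, ← Set.preimage_compl]
    exact hg hB
  refine hpre.subset ?_
  rintro _ ⟨v, hv, rfl⟩
  rwa [Set.mem_preimage, hgh v]

section Gradient

variable {X : Type*} [NormedAddCommGroup X] [InnerProductSpace ℝ X] [CompleteSpace X]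
  {φ : X → ℝ}

theorem ConvexOn.add_inner_le_of_hasGradientAt (hφ : ConvexOn ℝ Set.univ φ) {x g : X}
    (hg : HasGradientAt φ g x) (y : X) : φ x + inner ℝ g (y - x) ≤ φ y := by
  let L := AffineMap.lineMap (k := ℝ) x y
  have hderiv : HasDerivAt (φ ∘ L) (inner ℝ g (y - x)) 0 := by
    have hφL : HasFDerivAt φ (InnerProductSpace.toDual ℝ X g) (L 0) := by
      simpa [L] using hg.hasFDerivAt
    simpa [InnerProductSpace.toDual_apply_apply] using
      hφL.comp_hasDerivAt 0 AffineMap.hasDerivAt_lineMap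
  have hconvL : ConvexOn ℝ Set.univ (φ ∘ L) := by simpa using hφ.comp_affineMap L
  have hslope := hconvL.le_slope_of_hasDerivAt (Set.mem_univ 0) (Set.mem_univ 1) zero_lt_one hderiv
  simp only [slope_def_field, Function.comp_apply, L, AffineMap.lineMap_apply_zero,
    AffineMap.lineMap_apply_one, sub_zero, div_one] at hslope
  linarith

theorem ConvexOn.tendsto_gradient_cobounded (hφ : ConvexOn ℝ Set.univ φ) {g : X → X}
    (hg : ∀ x, HasGradientAt φ (g x) x)
    (hsc : Tendsto (fun x => φ x / ‖x‖) (cobounded X) atTop) :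
    Tendsto g (cobounded X) (cobounded X) := by
  refine tendsto_norm_atTop_iff_cobounded.1 (tendsto_atTop.2 fun M => ?_)
  filter_upwards [hsc.eventually_ge_atTop (M + |φ 0|), eventually_cobounded_le_norm 1]
    with x hφx hx
  have hxpos : 0 < ‖x‖ := one_pos.trans_le hx
  rw [le_div_iff₀ hxpos] at hφx
  have hsupport := hφ.add_inner_le_of_hasGradientAt (hg x) 0
  rw [zero_sub, inner_neg_right] at hsupport
  refine le_of_mul_le_mul_right ?_ hxpos
  calc M * ‖x‖ ≤ (M + |φ 0|) * ‖x‖ - |φ 0| := by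
        linarith [mul_le_mul_of_nonneg_left hx (abs_nonneg (φ 0))]
    _ ≤ φ x - φ 0 := by linarith [le_abs_self (φ 0)]
    _ ≤ inner ℝ (g x) x := by linarith
    _ ≤ ‖g x‖ * ‖x‖ := real_inner_le_norm (g x) x

end Gradient

theorem stmt5_general {X : Type*} [NormedAddCommGroup X] [InnerProductSpace ℝ X] [CompleteSpace X]
    (φ : X → ℝ) (gφ gφs : X → X)
    (hconv : StrictConvexOn ℝ Set.univ φ)
    (hgrad : ∀ x, HasGradientAt φ (gφ x) x)
    (hsc : Filter.Tendsto (fun x => φ x / ‖x‖) (Filter.cocompact X) Filter.atTop)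
    (hinv2 : Function.RightInverse gφs gφ)
    (T : X → Set X) (ρ : ℝ) :
    IsCoerciveOp T ↔ IsCoerciveOp (fun x => {v : X | v ∈ T (x - ρ • gφs v)}) := by
  have hgφ : Tendsto gφ (cobounded X) (cobounded X) :=
    hconv.convexOn.tendsto_gradient_cobounded hgrad (hsc.mono_left Metric.cobounded_le_cocompact)
  refine isCoerciveOp_shift_iff T fun B hB => ?_
  refine ((isBounded_image_of_rightInverse hgφ hinv2 hB).smul₀ ρ).subset ?_
  rintro _ ⟨v, hv, rfl⟩
  exact Set.smul_mem_smul_set (Set.mem_image_of_mem gφs hv)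

/-- `T` is coercive iff its Bregman–Yosida regularization `T_ρ = (ρ∇φ* + T⁻¹)⁻¹`
is coercive. -/
theorem stmt5 {X : Type*} [NormedAddCommGroup X] [InnerProductSpace ℝ X] [CompleteSpace X]
    (φ : X → ℝ) (gφ gφs : X → X)
    (hconv : StrictConvexOn ℝ Set.univ φ)
    (hgrad : ∀ x, HasGradientAt φ (gφ x) x)
    (hsc : Filter.Tendsto (fun x => φ x / ‖x‖) (Filter.cocompact X) Filter.atTop)
    (hinv1 : Function.LeftInverse gφs gφ)
    (hinv2 : Function.RightInverse gφs gφ)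
    (hcont : Continuous gφs)
    (T : X → Set X) (ρ : ℝ) (hρ : 0 ≤ ρ) :
    IsCoerciveOp T ↔ IsCoerciveOp (fun x => {v : X | v ∈ T (x - ρ • gφs v)}) :=
  stmt5_general φ gφ gφs hconv hgrad hsc hinv2 T ρ
end

section
/- (Absorption of relaxation into Yosida regularization) Let T: X ⇉ X* be set-valued, ρ ≥ 0, τ > 0, γ = τ + ρ, λ = τ/γ ∈ (0,1]. Then (Id + τ∇φ* ∘ T_ρ)⁻¹ = (1−λ)Id + λ(Id + γ∇φ* ∘ T)⁻¹, where T_ρ = (ρ∇φ* + T⁻¹)⁻¹. -/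
/-- Absorption of relaxation into the Bregman–Yosida regularization:
`(Id + τ∇φ* ∘ T_ρ)⁻¹ = (1−λ)Id + λ(Id + γ∇φ* ∘ T)⁻¹` with `γ = τ + ρ`, `λ = τ/γ`. -/
theorem stmt6 {X : Type*} [NormedAddCommGroup X] [InnerProductSpace ℝ X] [CompleteSpace X]
    (φ : X → ℝ) (gφ gφs : X → X)
    (hconv : StrictConvexOn ℝ Set.univ φ)
    (hgrad : ∀ x, HasGradientAt φ (gφ x) x)
    (hsc : Filter.Tendsto (fun x => φ x / ‖x‖) (Filter.cocompact X) Filter.atTop)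
    (hinv1 : Function.LeftInverse gφs gφ)
    (hinv2 : Function.RightInverse gφs gφ)
    (h0 : gφ 0 = 0)
    (T : X → Set X) (ρ τ γ lam : ℝ) (hρ : 0 ≤ ρ) (hτ : 0 < τ)
    (hγ : γ = τ + ρ) (hlam : lam = τ / γ) :
    ∀ y x : X,
      (∃ v : X, v ∈ T (x - ρ • gφs v) ∧ y = x + τ • gφs v) ↔
        (∃ z : X, (∃ w : X, w ∈ T z ∧ y = z + γ • gφs w) ∧
          x = (1 - lam) • y + lam • z) := by
  subst hγ hlam
  have hg : (0:ℝ) < τ + ρ := by linarith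
  have hg' : (τ + ρ) ≠ 0 := ne_of_gt hg
  intro y x
  constructor
  · rintro ⟨v, hv, hy⟩
    refine ⟨x - ρ • gφs v, ⟨v, hv, ?_⟩, ?_⟩
    · rw [hy]; match_scalars <;> ring
    · rw [hy]; match_scalars <;> field_simp <;> ring
  · rintro ⟨z, ⟨w, hw, hy⟩, hx⟩
    have hz : x - ρ • gφs w = z := by
      rw [hx, hy]; match_scalars <;> field_simp <;> ring
    refine ⟨w, by rwa [hz], ?_⟩
    rw [hx, hy]; match_scalars <;> field_simp <;> ring
end

section
/- (Dual-space Fejér monotonicity, exact case) Let T: X ⇉ X* be monotone, φ strictly convex smooth super-coercive with ∇φ(0)=0, and let sequences satisfy vᵏ ∈ T(x^{k+1}) and x^{k+1} = xᵏ − ∇φ*(vᵏ) for all k. Then for each k: D_{φ*}(v^{k+1}, 0) ≤ D_{φ*}(vᵏ, 0) − D_{φ*}(vᵏ, v^{k+1}), where D_{φ*}(u,v) = φ*(u) − φ*(v) − ⟨∇φ*(v), u−v⟩. -/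
/-!
Write `D(u, w) = φ*(u) - φ*(w) - ⟪∇φ*(w), u - w⟫`. The three-point identity
`D(vᵏ, 0) = D(vᵏ⁺¹, 0) + D(vᵏ, vᵏ⁺¹) + ⟪∇φ*(vᵏ⁺¹) - ∇φ*(0), vᵏ - vᵏ⁺¹⟫` reduces the claim to
the nonnegativity of the last term. Since `∇φ*(0) = 0` and `∇φ*(vᵏ⁺¹) = xᵏ⁺¹ - xᵏ⁺²`, that term
is `⟪vᵏ - vᵏ⁺¹, xᵏ⁺¹ - xᵏ⁺²⟫ ≥ 0`, by monotonicity of `T` at `vᵏ ∈ T xᵏ⁺¹`, `vᵏ⁺¹ ∈ T xᵏ⁺²`.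
-/

open scoped RealInnerProductSpace

section Bregman

variable {X : Type*} [NormedAddCommGroup X] [InnerProductSpace ℝ X]

def bregmanDiv (f : X → ℝ) (g : X → X) (u w : X) : ℝ :=
  f u - f w - ⟪g w, u - w⟫

theorem bregmanDiv_three_point (f : X → ℝ) (g : X → X) (u w c : X) :
    bregmanDiv f g u c =
      bregmanDiv f g w c + bregmanDiv f g u w + ⟪g w - g c, u - w⟫ := by
  simp only [bregmanDiv, inner_sub_left, inner_sub_right]
  ring

theorem bregmanDiv_le_sub_of_inner_nonneg (f : X → ℝ) (g : X → X) {u w c : X}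
    (h : 0 ≤ ⟪g w - g c, u - w⟫) :
    bregmanDiv f g w c ≤ bregmanDiv f g u c - bregmanDiv f g u w := by
  linarith [bregmanDiv_three_point f g u w c]

end Bregman

theorem inner_step_nonneg_of_monotone {X : Type*} [NormedAddCommGroup X]
    [InnerProductSpace ℝ X] {T : X → Set X} {g : X → X} {x v : ℕ → X}
    (hmono : ∀ a b u w : X, u ∈ T a → w ∈ T b → 0 ≤ ⟪u - w, a - b⟫)
    (hv : ∀ k, v k ∈ T (x (k + 1))) (hx : ∀ k, x (k + 1) = x k - g (v k)) (k : ℕ) :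
    0 ≤ ⟪g (v (k + 1)), v k - v (k + 1)⟫ := by
  have hstep : g (v (k + 1)) = x (k + 1) - x (k + 2) := by
    rw [hx (k + 1), sub_sub_cancel]
  rw [hstep, real_inner_comm]
  exact hmono _ _ _ _ (hv k) (hv (k + 1))

theorem stmt11_general {X : Type*} [NormedAddCommGroup X] [InnerProductSpace ℝ X]
    (φs : X → ℝ) (gφ gφs : X → X)
    (hinv1 : Function.LeftInverse gφs gφ)
    (h0 : gφ 0 = 0)
    (T : X → Set X)
    (hmono : ∀ a b u w : X, u ∈ T a → w ∈ T b → 0 ≤ ⟪u - w, a - b⟫)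
    (x v : ℕ → X)
    (hv : ∀ k, v k ∈ T (x (k + 1)))
    (hx : ∀ k, x (k + 1) = x k - gφs (v k)) :
    ∀ k,
      φs (v (k + 1)) - φs 0 - ⟪gφs 0, v (k + 1) - 0⟫ ≤
        (φs (v k) - φs 0 - ⟪gφs 0, v k - 0⟫) -
          (φs (v k) - φs (v (k + 1)) - ⟪gφs (v (k + 1)), v k - v (k + 1)⟫) := by
  intro k
  have hgφs0 : gφs 0 = 0 := by simpa [h0] using hinv1 0
  have hinner : 0 ≤ ⟪gφs (v (k + 1)) - gφs 0, v k - v (k + 1)⟫ := by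
    rw [hgφs0, sub_zero]
    exact inner_step_nonneg_of_monotone hmono hv hx k
  exact bregmanDiv_le_sub_of_inner_nonneg φs gφs hinner

/-- Dual-space Fejér monotonicity (exact case) for the anisotropic proximal point
iteration `vᵏ ∈ T(x^{k+1})`, `x^{k+1} = xᵏ − ∇φ*(vᵏ)`. -/
theorem stmt11 {X : Type*} [NormedAddCommGroup X] [InnerProductSpace ℝ X] [CompleteSpace X]
    (φ φs : X → ℝ) (gφ gφs : X → X)
    (hconv : StrictConvexOn ℝ Set.univ φ)
    (hgrad : ∀ x, HasGradientAt φ (gφ x) x)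
    (hgrads : ∀ x, HasGradientAt φs (gφs x) x)
    (hsc : Filter.Tendsto (fun x => φ x / ‖x‖) (Filter.cocompact X) Filter.atTop)
    (hinv1 : Function.LeftInverse gφs gφ)
    (hinv2 : Function.RightInverse gφs gφ)
    (h0 : gφ 0 = 0)
    (T : X → Set X)
    (hmono : ∀ a b u w : X, u ∈ T a → w ∈ T b → 0 ≤ ⟪u - w, a - b⟫)
    (x v : ℕ → X)
    (hv : ∀ k, v k ∈ T (x (k + 1)))
    (hx : ∀ k, x (k + 1) = x k - gφs (v k)) :
    ∀ k,
      φs (v (k + 1)) - φs 0 - ⟪gφs 0, v (k + 1) - 0⟫ ≤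
        (φs (v k) - φs 0 - ⟪gφs 0, v k - 0⟫) -
          (φs (v k) - φs (v (k + 1)) - ⟪gφs (v (k + 1)), v k - v (k + 1)⟫) :=
  stmt11_general φs gφ gφs hinv1 h0 T hmono x v hv hx
end

section
/- Let T: X ⇉ X* with 0 ∈ T(x⋆) be monotone, φ strictly convex smooth super-coercive with ∇φ(0)=0 and ∇φ* continuous and strictly monotone. Suppose vᵏ ∈ T(x^{k+1}) and x^{k+1} = xᵏ − ∇φ*(vᵏ) for all k, and suppose vᵏ → v⋆ converges. Then v⋆ = 0. -/
/-!
The primal iterates satisfy `xⁿ = x⁰ - ∑_{i<n} ∇φ*(vⁱ)`, so by Cesàro `xⁿ / n → -∇φ*(v⋆)`.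
Monotonicity of `T` against `0 ∈ T x⋆` makes `⟪vⁿ, xⁿ⁺¹ - x⋆⟫ ≥ 0`; dividing by `n + 1` and
passing to the limit gives `⟪v⋆, ∇φ*(v⋆)⟫ ≤ 0`, which strict monotonicity of `∇φ*` together with
`∇φ*(0) = 0` only allows for `v⋆ = 0`.
-/

open Filter Topology Finset
open scoped RealInnerProductSpace

section Iterates

variable {E : Type*} {x d : ℕ → E}

theorem eq_sub_sum_range_of_succ_eq_sub [AddCommGroup E] (hx : ∀ k, x (k + 1) = x k - d k)
    (n : ℕ) : x n = x 0 - ∑ i ∈ range n, d i := by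
  induction n with
  | zero => simp
  | succ n ih =>
    rw [hx n, ih, sum_range_succ]
    abel

theorem tendsto_inv_smul_of_succ_eq_sub [NormedAddCommGroup E] [NormedSpace ℝ E] {L : E}
    (hx : ∀ k, x (k + 1) = x k - d k) (hd : Tendsto d atTop (𝓝 L)) :
    Tendsto (fun n : ℕ => (n : ℝ)⁻¹ • x n) atTop (𝓝 (-L)) := by
  have hx0 : Tendsto (fun n : ℕ => (n : ℝ)⁻¹ • x 0) atTop (𝓝 0) := by
    simpa using
      (tendsto_inv_atTop_zero.comp (tendsto_natCast_atTop_atTop (R := ℝ))).smul_const (x 0)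
  have hlim := hx0.sub hd.cesaro_smul
  rw [zero_sub] at hlim
  refine hlim.congr fun n => ?_
  rw [eq_sub_sum_range_of_succ_eq_sub hx n, smul_sub]

theorem real_inner_nonpos_of_inner_succ_nonneg [NormedAddCommGroup E] [InnerProductSpace ℝ E]
    {v : ℕ → E} {L w : E} (hx : ∀ k, x (k + 1) = x k - d k) (hd : Tendsto d atTop (𝓝 L))
    (hv : Tendsto v atTop (𝓝 w)) (hpos : ∀ k, 0 ≤ ⟪v k, x (k + 1)⟫) : ⟪w, L⟫ ≤ 0 := by
  have hy := (tendsto_inv_smul_of_succ_eq_sub hx hd).comp (tendsto_add_atTop_nat 1)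
  have hlim : 0 ≤ ⟪w, -L⟫ := ge_of_tendsto' (hv.inner hy) fun n => by
    simp only [Function.comp_apply, real_inner_smul_right]
    exact mul_nonneg (by positivity) (hpos n)
  rw [inner_neg_right] at hlim
  linarith

end Iterates

theorem stmt12_general {X : Type*} [NormedAddCommGroup X] [InnerProductSpace ℝ X]
    (gφ gφs : X → X)
    (hinv1 : Function.LeftInverse gφs gφ)
    (h0 : gφ 0 = 0)
    (hcont : Continuous gφs)
    (hsmono : ∀ u w : X, u ≠ w → 0 < ⟪gφs u - gφs w, u - w⟫)
    (T : X → Set X)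
    (hmono : ∀ a b u w : X, u ∈ T a → w ∈ T b → 0 ≤ ⟪u - w, a - b⟫)
    (xstar : X) (hstar : (0 : X) ∈ T xstar)
    (x v : ℕ → X)
    (hv : ∀ k, v k ∈ T (x (k + 1)))
    (hx : ∀ k, x (k + 1) = x k - gφs (v k))
    (vstar : X) (hlim : Filter.Tendsto v Filter.atTop (nhds vstar)) :
    vstar = 0 := by
  by_contra hne
  have hgs0 : gφs 0 = 0 := by simpa [h0] using hinv1 0
  have hpos := hsmono vstar 0 hne
  rw [hgs0, sub_zero, sub_zero, real_inner_comm] at hpos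
  have hle : ⟪vstar, gφs vstar⟫ ≤ 0 :=
    real_inner_nonpos_of_inner_succ_nonneg (x := fun k => x k - xstar)
      (fun k => by rw [hx, Function.comp_apply]; abel) ((hcont.tendsto vstar).comp hlim) hlim
      (fun k => by simpa using hmono _ _ _ _ (hv k) hstar)
  linarith

/-- If the dual iterates of the anisotropic proximal point algorithm converge,
their limit is `0`. -/
theorem stmt12 {X : Type*} [NormedAddCommGroup X] [InnerProductSpace ℝ X] [CompleteSpace X]
    (φ : X → ℝ) (gφ gφs : X → X)
    (hconv : StrictConvexOn ℝ Set.univ φ)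
    (hgrad : ∀ x, HasGradientAt φ (gφ x) x)
    (hsc : Filter.Tendsto (fun x => φ x / ‖x‖) (Filter.cocompact X) Filter.atTop)
    (hinv1 : Function.LeftInverse gφs gφ)
    (hinv2 : Function.RightInverse gφs gφ)
    (h0 : gφ 0 = 0)
    (hcont : Continuous gφs)
    (hsmono : ∀ u w : X, u ≠ w → 0 < ⟪gφs u - gφs w, u - w⟫)
    (T : X → Set X)
    (hmono : ∀ a b u w : X, u ∈ T a → w ∈ T b → 0 ≤ ⟪u - w, a - b⟫)
    (xstar : X) (hstar : (0 : X) ∈ T xstar)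
    (x v : ℕ → X)
    (hv : ∀ k, v k ∈ T (x (k + 1)))
    (hx : ∀ k, x (k + 1) = x k - gφs (v k))
    (vstar : X) (hlim : Filter.Tendsto v Filter.atTop (nhds vstar)) :
    vstar = 0 :=
  stmt12_general gφ gφs hinv1 h0 hcont hsmono T hmono xstar hstar x v hv hx vstar hlim
end

section
/- (Local convergence of arbitrary order) Let φ(x) = (1/p)‖x‖_p^p with p > 1, T: X ⇉ X* set-valued with nonempty zero set Z := zer T, and suppose the growth condition holds: there exist ρ, ν, δ > 0 such that x ∈ T⁻¹(v) and ‖v‖_q < δ implies dist_p(Z, x) ≤ ρ‖v‖_q^ν. Suppose x⁺ minimizes u ↦ ‖x − u‖_p over a half-space H containing Z, with v := ∇φ(x − x⁺) ∈ T(x⁺) and ‖v‖_q < δ. Then dist_p(Z, x⁺) ≤ ρ · dist_p(Z, x)^{ν(p−1)}. -/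
/-!
The growth condition at `x⁺` bounds `dist_p(Z, x⁺)` by `ρ ‖v‖_q ^ ν`, and `‖∇φ(y)‖_q = ‖y‖_p ^ (p - 1)`
turns this into `ρ ‖x - x⁺‖_p ^ (ν (p - 1))`. Since `Z ⊆ H` and `x⁺` is a point of `H` closest to `x`,
`‖x - x⁺‖_p ≤ dist_p(Z, x)`.
-/

/-- The ℓᵖ norm on `ℝⁿ`. -/
noncomputable def lpNormN (p : ℝ) {n : ℕ} (z : Fin n → ℝ) : ℝ :=
  (∑ i, |z i| ^ p) ^ (1 / p)

/-- The ℓᵖ distance from a point to a set. -/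
noncomputable def lpDist (p : ℝ) {n : ℕ} (Z : Set (Fin n → ℝ)) (x : Fin n → ℝ) : ℝ :=
  sInf {r : ℝ | ∃ z ∈ Z, r = lpNormN p (x - z)}

/-- The gradient of `φ(x) = (1/p)‖x‖_p^p`. -/
noncomputable def gradLp17 (p : ℝ) {n : ℕ} (x : Fin n → ℝ) : Fin n → ℝ :=
  fun i => Real.sign (x i) * |x i| ^ (p - 1)

section LpNorm

variable {n : ℕ} (p : ℝ)

lemma lpNormN_nonneg (z : Fin n → ℝ) : 0 ≤ lpNormN p z :=
  Real.rpow_nonneg (Finset.sum_nonneg fun _ _ => Real.rpow_nonneg (abs_nonneg _) _) _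

lemma le_lpDist {Z : Set (Fin n → ℝ)} (hZ : Z.Nonempty) {x : Fin n → ℝ} {r : ℝ}
    (h : ∀ z ∈ Z, r ≤ lpNormN p (x - z)) : r ≤ lpDist p Z x := by
  obtain ⟨z₀, hz₀⟩ := hZ
  refine le_csInf ⟨_, z₀, hz₀, rfl⟩ ?_
  rintro r ⟨z, hz, rfl⟩
  exact h z hz

variable {p}

-- At `t i = 0` both sides vanish only because `p - 1 ≠ 0` (`0 ^ 0 = 1` for `Real.rpow`).
lemma abs_gradLp17 (hp : p ≠ 1) (t : Fin n → ℝ) (i : Fin n) :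
    |gradLp17 p t i| = |t i| ^ (p - 1) := by
  rcases lt_trichotomy (t i) 0 with h | h | h
  · simp [gradLp17, Real.sign_of_neg h, abs_of_nonneg (Real.rpow_nonneg (abs_nonneg (t i)) _)]
  · simp [gradLp17, h, Real.zero_rpow (sub_ne_zero.mpr hp)]
  · simp [gradLp17, Real.sign_of_pos h, abs_of_nonneg (Real.rpow_nonneg (abs_nonneg (t i)) _)]

lemma lpNormN_gradLp17 {q : ℝ} (hp : 1 < p) (hq : q = p / (p - 1)) (t : Fin n → ℝ) :
    lpNormN q (gradLp17 p t) = lpNormN p t ^ (p - 1) := by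
  have hp₁ : p - 1 ≠ 0 := sub_ne_zero.mpr hp.ne'
  have hpq : (p - 1) * q = p := by rw [hq]; field_simp
  have hsum : ∑ i, |gradLp17 p t i| ^ q = ∑ i, |t i| ^ p := by
    refine Finset.sum_congr rfl fun i _ => ?_
    rw [abs_gradLp17 hp.ne', ← Real.rpow_mul (abs_nonneg _), hpq]
  have hS : 0 ≤ ∑ i, |t i| ^ p :=
    Finset.sum_nonneg fun _ _ => Real.rpow_nonneg (abs_nonneg _) _
  rw [lpNormN, lpNormN, hsum, ← Real.rpow_mul hS, hq]
  congr 1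
  field_simp

end LpNorm

theorem stmt17_general {n : ℕ} (p q ρ ν δ : ℝ) (hp : 1 < p) (hq : q = p / (p - 1))
    (hρ : 0 < ρ) (hν : 0 < ν)
    (T : (Fin n → ℝ) → Set (Fin n → ℝ))
    (Z : Set (Fin n → ℝ)) (hZne : Z.Nonempty)
    (growth : ∀ x v, v ∈ T x → lpNormN q v < δ → lpDist p Z x ≤ ρ * lpNormN q v ^ ν)
    (H : Set (Fin n → ℝ)) (hZH : Z ⊆ H)
    (x xp : Fin n → ℝ)
    (hmin : ∀ u ∈ H, lpNormN p (x - xp) ≤ lpNormN p (x - u))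
    (hv : gradLp17 p (x - xp) ∈ T xp)
    (hsmall : lpNormN q (gradLp17 p (x - xp)) < δ) :
    lpDist p Z xp ≤ ρ * lpDist p Z x ^ (ν * (p - 1)) := by
  have hproj : lpNormN p (x - xp) ≤ lpDist p Z x :=
    le_lpDist p hZne fun z hz => hmin z (hZH hz)
  have hexp : 0 ≤ ν * (p - 1) := mul_nonneg hν.le (by linarith)
  calc lpDist p Z xp ≤ ρ * lpNormN q (gradLp17 p (x - xp)) ^ ν := growth xp _ hv hsmall
    _ = ρ * lpNormN p (x - xp) ^ (ν * (p - 1)) := by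
      rw [lpNormN_gradLp17 hp hq, ← Real.rpow_mul (lpNormN_nonneg p _), mul_comm ν]
    _ ≤ ρ * lpDist p Z x ^ (ν * (p - 1)) := by
      gcongr
      exact lpNormN_nonneg p _

/-- Local convergence of arbitrary order `ν(p−1)` of the anisotropic proximal point
step under the Hölder growth condition. -/
theorem stmt17 {n : ℕ} (p q ρ ν δ : ℝ) (hp : 1 < p) (hq : q = p / (p - 1))
    (hρ : 0 < ρ) (hν : 0 < ν) (hδ : 0 < δ)
    (T : (Fin n → ℝ) → Set (Fin n → ℝ))
    (Z : Set (Fin n → ℝ)) (hZdef : Z = {z | 0 ∈ T z}) (hZne : Z.Nonempty)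
    (growth : ∀ x v, v ∈ T x → lpNormN q v < δ → lpDist p Z x ≤ ρ * lpNormN q v ^ ν)
    (H : Set (Fin n → ℝ)) (z0 nv : Fin n → ℝ) (hnv : nv ≠ 0)
    (hH : H = {w | ∑ i, (w i - z0 i) * nv i ≤ 0}) (hZH : Z ⊆ H)
    (x xp : Fin n → ℝ) (hxp : xp ∈ H)
    (hmin : ∀ u ∈ H, lpNormN p (x - xp) ≤ lpNormN p (x - u))
    (hv : gradLp17 p (x - xp) ∈ T xp)
    (hsmall : lpNormN q (gradLp17 p (x - xp)) < δ) :
    lpDist p Z xp ≤ ρ * lpDist p Z x ^ (ν * (p - 1)) :=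
  stmt17_general p q ρ ν δ hp hq hρ hν T Z hZne growth H hZH x xp hmin hv hsmall
end

section
/- Let T: X ⇉ X* be set-valued, ε ≥ 0, ρ ≥ 0, and let T^e(ε, x) := {u : ⟨y−x, v−u⟩ ≥ −ε for all (y,v) ∈ gph T} be the ε-enlargement of T. Then for every x, the Bregman–Yosida regularization of the enlargement is contained in the enlargement of the Bregman–Yosida regularization: (T^e(ε,·))_ρ(x) ⊆ (T_ρ)^e(ε, x), where S_ρ := (ρ∇φ* + S⁻¹)⁻¹. -/
open scoped RealInnerProductSpace

section Monotone

variable {X : Type*} [NormedAddCommGroup X] [InnerProductSpace ℝ X]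

theorem inner_sub_sub_nonneg_of_strict {g : X → X}
    (hg : ∀ u w : X, u ≠ w → 0 < ⟪g u - g w, u - w⟫) (u w : X) :
    0 ≤ ⟪g u - g w, u - w⟫ := by
  rcases eq_or_ne u w with rfl | huw
  · simp
  · exact (hg u w huw).le

theorem inner_sub_smul_sub_le {g : X → X} (hg : ∀ u w : X, 0 ≤ ⟪g u - g w, u - w⟫)
    {ρ : ℝ} (hρ : 0 ≤ ρ) (x y u v : X) :
    ⟪y - ρ • g v - (x - ρ • g u), v - u⟫ ≤ ⟪y - x, v - u⟫ := by
  have hsplit : y - ρ • g v - (x - ρ • g u) = (y - x) - ρ • (g v - g u) := by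
    rw [smul_sub]; abel
  rw [hsplit, inner_sub_left, real_inner_smul_left, sub_le_self_iff]
  exact mul_nonneg hρ (hg v u)

end Monotone

theorem stmt18_general {X : Type*} [NormedAddCommGroup X] [InnerProductSpace ℝ X]
    (gφs : X → X)
    (hsmono : ∀ u w : X, u ≠ w → 0 < ⟪gφs u - gφs w, u - w⟫)
    (T : X → Set X) (ε ρ : ℝ) (hρ : 0 ≤ ρ) :
    ∀ x : X,
      {u : X | ∀ y v : X, v ∈ T y → -ε ≤ ⟪y - (x - ρ • gφs u), v - u⟫} ⊆
        {u : X | ∀ y v : X, v ∈ T (y - ρ • gφs v) → -ε ≤ ⟪y - x, v - u⟫} := by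
  intro x u hu y v hv
  exact (hu _ v hv).trans
    (inner_sub_smul_sub_le (inner_sub_sub_nonneg_of_strict hsmono) hρ x y u v)

/-- The Bregman–Yosida regularization of the ε-enlargement is contained in the
ε-enlargement of the Bregman–Yosida regularization:
`(T^e(ε,·))_ρ(x) ⊆ (T_ρ)^e(ε, x)`. -/
theorem stmt18 {X : Type*} [NormedAddCommGroup X] [InnerProductSpace ℝ X] [CompleteSpace X]
    (φ : X → ℝ) (gφ gφs : X → X)
    (hconv : StrictConvexOn ℝ Set.univ φ)
    (hgrad : ∀ x, HasGradientAt φ (gφ x) x)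
    (hsc : Filter.Tendsto (fun x => φ x / ‖x‖) (Filter.cocompact X) Filter.atTop)
    (hinv1 : Function.LeftInverse gφs gφ)
    (hinv2 : Function.RightInverse gφs gφ)
    (hsmono : ∀ u w : X, u ≠ w → 0 < ⟪gφs u - gφs w, u - w⟫)
    (T : X → Set X) (ε ρ : ℝ) (hε : 0 ≤ ε) (hρ : 0 ≤ ρ) :
    ∀ x : X,
      {u : X | ∀ y v : X, v ∈ T y → -ε ≤ ⟪y - (x - ρ • gφs u), v - u⟫} ⊆
        {u : X | ∀ y v : X, v ∈ T (y - ρ • gφs v) → -ε ≤ ⟪y - x, v - u⟫} :=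
  stmt18_general gφs hsmono T ε ρ hρ
end

section
/- Let T(x) = Ax with A = [[0,1],[−1,0]] on ℝ², φ(x) = (1/p)‖x‖_p^p with p > 2, q = p/(p−1), and let x^{k+1} satisfy ∇φ(xᵏ − x^{k+1}) = T(x^{k+1}) (the anisotropic proximal point update). Then the ℓq norm decreases: (1/q)‖x^{k+1}‖_q^q ≤ (1/q)‖xᵏ‖_q^q − D_{φ*}(T xᵏ, T x^{k+1}), where D_{φ*} is the Bregman distance of φ*(v) = (1/q)‖v‖_q^q. In particular ‖x^{k+1}‖_q ≤ ‖xᵏ‖_q. -/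
/-!
Coordinatewise, `sgnPow (q - 1)` inverts `sgnPow (p - 1)` for conjugate exponents, so the update
says `∇φ*(T x^{k+1}) = x^k - x^{k+1}`. The linear term of `D_{φ*}(T x^k, T x^{k+1})` is then
`⟨x^k - x^{k+1}, T (x^k - x^{k+1})⟩ = 0` by skew-symmetry, and `φ* ∘ T = φ*`, so the Bregman
distance equals `φ*(x^k) - φ*(x^{k+1})` exactly. Young's inequality makes it nonnegative.
-/

/-- Coordinatewise `sign(t)|t|^r`. -/
noncomputable def sgnPow (r t : ℝ) : ℝ := Real.sign t * |t| ^ r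

/-- The gradient of `(1/r)‖·‖_r^r` on `ℝ × ℝ`. -/
noncomputable def gradPow (r : ℝ) (z : ℝ × ℝ) : ℝ × ℝ :=
  (sgnPow (r - 1) z.1, sgnPow (r - 1) z.2)

/-- `φ*(v) = (1/q)‖v‖_q^q` on `ℝ × ℝ`. -/
noncomputable def phiStar (q : ℝ) (v : ℝ × ℝ) : ℝ := (1 / q) * (|v.1| ^ q + |v.2| ^ q)

/-- Euclidean inner product on `ℝ × ℝ`. -/
def dotR2 (a b : ℝ × ℝ) : ℝ := a.1 * b.1 + a.2 * b.2

/-- Bregman distance of `φ* = (1/q)‖·‖_q^q`. -/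
noncomputable def DqBreg (q : ℝ) (u v : ℝ × ℝ) : ℝ :=
  phiStar q u - phiStar q v - dotR2 (gradPow q v) (u - v)

/-- The skew-symmetric rotation `T(x₁,x₂) = (x₂, −x₁)`. -/
def Trot (x : ℝ × ℝ) : ℝ × ℝ := (x.2, -x.1)

lemma Real.sign_mul_abs (t : ℝ) : Real.sign t * |t| = t := by
  rcases lt_trichotomy t 0 with ht | rfl | ht
  · rw [Real.sign_of_neg ht, abs_of_neg ht]; ring
  · simp
  · rw [Real.sign_of_pos ht, abs_of_pos ht, one_mul]

lemma Real.sign_mul_self (t : ℝ) : Real.sign t * t = |t| := by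
  rcases lt_trichotomy t 0 with ht | rfl | ht
  · rw [Real.sign_of_neg ht, abs_of_neg ht]; ring
  · simp
  · rw [Real.sign_of_pos ht, abs_of_pos ht, one_mul]

lemma Real.abs_sign_le_one (t : ℝ) : |Real.sign t| ≤ 1 := by
  rcases Real.sign_apply_eq t with h | h | h <;> simp [h]

lemma sgnPow_one (t : ℝ) : sgnPow 1 t = t := by
  rw [sgnPow, Real.rpow_one, Real.sign_mul_abs]

lemma sgnPow_sgnPow (r s t : ℝ) : sgnPow s (sgnPow r t) = sgnPow (r * s) t := by
  rcases lt_trichotomy t 0 with ht | rfl | ht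
  · have hpos : 0 < |t| ^ r := Real.rpow_pos_of_pos (abs_pos.mpr ht.ne) r
    simp only [sgnPow, Real.sign_of_neg ht, neg_one_mul, Real.sign_neg, Real.sign_of_pos hpos,
      abs_neg, abs_of_pos hpos, ← Real.rpow_mul (abs_nonneg t)]
  · simp [sgnPow]
  · have hpos : 0 < |t| ^ r := Real.rpow_pos_of_pos (abs_pos.mpr ht.ne') r
    simp only [sgnPow, Real.sign_of_pos ht, one_mul, Real.sign_of_pos hpos,
      abs_of_pos hpos, ← Real.rpow_mul (abs_nonneg t)]

lemma sgnPow_mul_self {r : ℝ} (hr : r + 1 ≠ 0) (v : ℝ) : sgnPow r v * v = |v| ^ (r + 1) := by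
  rcases eq_or_ne v 0 with rfl | hv
  · simp [Real.zero_rpow hr]
  · rw [Real.rpow_add_one (abs_ne_zero.mpr hv), sgnPow, mul_right_comm, mul_comm,
      Real.sign_mul_self]

lemma sgnPow_mul_le (r u v : ℝ) : sgnPow r v * u ≤ |v| ^ r * |u| := by
  calc sgnPow r v * u ≤ |sgnPow r v * u| := le_abs_self _
    _ ≤ |v| ^ r * |u| := by
      rw [abs_mul, sgnPow, abs_mul, abs_of_nonneg (by positivity : (0 : ℝ) ≤ |v| ^ r)]
      gcongr
      exact mul_le_of_le_one_left (by positivity) (Real.abs_sign_le_one v)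

lemma Real.HolderConjugate.sub_one_mul_sub_one {p q : ℝ} (hpq : p.HolderConjugate q) :
    (p - 1) * (q - 1) = 1 := by
  linear_combination hpq.mul_eq_add

lemma gradPow_gradPow {p q : ℝ} (hpq : p.HolderConjugate q) (z : ℝ × ℝ) :
    gradPow q (gradPow p z) = z := by
  simp only [gradPow, sgnPow_sgnPow, hpq.sub_one_mul_sub_one, sgnPow_one]

lemma sgnPow_mul_sub_le {q : ℝ} (hq : 1 < q) (u v : ℝ) :
    sgnPow (q - 1) v * (u - v) ≤ |u| ^ q / q - |v| ^ q / q := by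
  have hpq := (Real.HolderConjugate.conjExponent hq).symm
  set p := q.conjExponent
  have hself : sgnPow (q - 1) v * v = |v| ^ q := by
    simpa using sgnPow_mul_self (r := q - 1) (by simpa using hpq.symm.ne_zero) v
  have hyoung : |v| ^ (q - 1) * |u| ≤ |v| ^ q / p + |u| ^ q / q := by
    have := Real.young_inequality_of_nonneg (a := |v| ^ (q - 1)) (by positivity)
      (abs_nonneg u) hpq
    rwa [← Real.rpow_mul (abs_nonneg v), hpq.symm.sub_one_mul_conj] at this
  have hinv : 1 / p + 1 / q = 1 := by simpa using hpq.inv_add_inv_eq_one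
  calc sgnPow (q - 1) v * (u - v) = sgnPow (q - 1) v * u - |v| ^ q := by rw [mul_sub, hself]
    _ ≤ |v| ^ q / p + |u| ^ q / q - |v| ^ q := by linarith [sgnPow_mul_le (q - 1) u v]
    _ = |u| ^ q / q - |v| ^ q / q := by linear_combination (|v| ^ q) * hinv

lemma DqBreg_nonneg {q : ℝ} (hq : 1 < q) (u v : ℝ × ℝ) : 0 ≤ DqBreg q u v := by
  have h₁ := sgnPow_mul_sub_le hq u.1 v.1
  have h₂ := sgnPow_mul_sub_le hq u.2 v.2
  simp only [DqBreg, phiStar, dotR2, gradPow, Prod.fst_sub, Prod.snd_sub, one_div_mul_eq_div,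
    add_div]
  linarith

lemma phiStar_Trot (q : ℝ) (x : ℝ × ℝ) : phiStar q (Trot x) = phiStar q x := by
  simp only [phiStar, Trot, abs_neg, add_comm]

lemma dotR2_sub_Trot_sub (a b : ℝ × ℝ) : dotR2 (a - b) (Trot a - Trot b) = 0 := by
  simp only [dotR2, Trot, Prod.fst_sub, Prod.snd_sub, Prod.mk_sub_mk]
  ring

lemma DqBreg_Trot_of_gradPow_eq {q : ℝ} {a b : ℝ × ℝ} (h : gradPow q (Trot b) = a - b) :
    DqBreg q (Trot a) (Trot b) = phiStar q a - phiStar q b := by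
  rw [DqBreg, h, dotR2_sub_Trot_sub, phiStar_Trot, phiStar_Trot, sub_zero]

/-- Primal Fejér monotonicity in the ℓq sense for the anisotropic proximal point
algorithm applied to the skew-symmetric operator. -/
theorem stmt19 (p q : ℝ) (hp : 2 < p) (hq : q = p / (p - 1))
    (x : ℕ → ℝ × ℝ)
    (hup : ∀ k, gradPow p (x k - x (k + 1)) = Trot (x (k + 1))) :
    ∀ k,
      (1 / q) * (|(x (k + 1)).1| ^ q + |(x (k + 1)).2| ^ q) ≤
        (1 / q) * (|(x k).1| ^ q + |(x k).2| ^ q) -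
          DqBreg q (Trot (x k)) (Trot (x (k + 1))) ∧
      (|(x (k + 1)).1| ^ q + |(x (k + 1)).2| ^ q) ^ (1 / q) ≤
        (|(x k).1| ^ q + |(x k).2| ^ q) ^ (1 / q) := by
  intro k
  have hpq : p.HolderConjugate q := (Real.holderConjugate_iff_eq_conjExponent (by linarith)).2 hq
  have hdual : gradPow q (Trot (x (k + 1))) = x k - x (k + 1) := by
    rw [← hup k, gradPow_gradPow hpq]
  have hD := DqBreg_Trot_of_gradPow_eq hdual
  have hmono : phiStar q (x (k + 1)) ≤ phiStar q (x k) := by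
    linarith [DqBreg_nonneg hpq.symm.lt (Trot (x k)) (Trot (x (k + 1)))]
  refine ⟨(show phiStar q _ ≤ phiStar q _ - _ by rw [hD, sub_sub_cancel]), ?_⟩
  exact Real.rpow_le_rpow (by positivity) ((mul_le_mul_iff_right₀ hpq.symm.one_div_pos).mp hmono)
    hpq.symm.one_div_nonneg
end
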